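/- As t → ∞, (1/t) φ(t) → H Γ ∫₀^∞ e^{−Γs} s^{2H−1} ds, the limit being a convergent Bochner integral. -/

import Mathlib

open MeasureTheory Set Filter

/-- `U(t) = H Γ ∫₀^t ∫₀^s e^{−Γ(s−u)} (s^{2H−1} − (s−u)^{2H−1}) du ds` (stated with
entrywise Bochner integrals). -/
noncomputable def fouU {d : ℕ} (Γ : Matrix (Fin d) (Fin d) ℝ) (H : ℝ) (t : ℝ) :
    Matrix (Fin d) (Fin d) ℝ :=
  H • (Γ * Matrix.of fun i j =>
    ∫ s in (0 : ℝ)..t, ∫ u in (0 : ℝ)..s,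
      NormedSpace.exp ((-(s - u)) • Γ) i j *
        (s ^ (2 * H - 1) - (s - u) ^ (2 * H - 1)))

/-- `φ(t) = ½ t^{2H} I − U(t)`. -/
noncomputable def fouPhi {d : ℕ} (Γ : Matrix (Fin d) (Fin d) ℝ) (H : ℝ) (t : ℝ) :
    Matrix (Fin d) (Fin d) ℝ :=
  (1 / 2 * t ^ (2 * H)) • (1 : Matrix (Fin d) (Fin d) ℝ) - fouU Γ H t

open Matrix NormedSpace

variable {d : ℕ} (Γ : Matrix (Fin d) (Fin d) ℝ)

/-- matrix exponential semigroup -/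
noncomputable def mE (s : ℝ) : Matrix (Fin d) (Fin d) ℝ := NormedSpace.exp ((-s) • Γ)

section
attribute [local instance] Matrix.linftyOpNormedRing Matrix.linftyOpNormedAlgebra

example : CompleteSpace (Matrix (Fin d) (Fin d) ℝ) := by infer_instance

lemma mE_cont : Continuous (mE Γ) := by
  exact exp_continuous.comp ((continuous_neg.comp continuous_id).smul continuous_const)

lemma mE_entry_cont (i j : Fin d) : Continuous (fun s => mE Γ s i j) := by
  exact ((continuous_apply j).comp (continuous_apply i)).comp (mE_cont Γ)

lemma mE_zero : mE Γ 0 = 1 := by simp [mE, NormedSpace.exp_zero]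

lemma mE_hasDerivAt (s : ℝ) : HasDerivAt (mE Γ) (-(Γ * mE Γ s)) s := by
  have h : ∀ u : ℝ, (-u) • Γ = u • (-Γ) := by intro u; rw [neg_smul, smul_neg]
  have := hasDerivAt_exp_smul_const' (𝕂 := ℝ) (-Γ) s
  simp only [← h] at this
  convert this using 1
  case e'_9 => rw [mE, neg_mul, neg_inj]; rfl
  all_goals rfl

/-- entry evaluation as a CLM (w.r.t. the linfty operator norm instances) -/
noncomputable def entryCLM (i j : Fin d) : Matrix (Fin d) (Fin d) ℝ →L[ℝ] ℝ :=
  { toFun := fun A => A i j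
    map_add' := fun _ _ => rfl
    map_smul' := fun _ _ => rfl
    cont := (continuous_apply j).comp (continuous_apply i) }

lemma mE_entry_hasDerivAt (i j : Fin d) (s : ℝ) :
    HasDerivAt (fun v => mE Γ v i j) (-(Γ * mE Γ s) i j) s := by
  exact (entryCLM i j).hasFDerivAt.comp_hasDerivAt s (mE_hasDerivAt Γ s)

lemma mE_ftc (i j : Fin d) (s : ℝ) :
    (∫ v in (0:ℝ)..s, (Γ * mE Γ v) i j) = (1 : Matrix (Fin d) (Fin d) ℝ) i j - mE Γ s i j := by
  have h := intervalIntegral.integral_eq_sub_of_hasDerivAt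
    (f := fun v => mE Γ v i j) (f' := fun v => (-(Γ * mE Γ v)) i j)
    (fun v _ => mE_entry_hasDerivAt Γ i j v)
    (Continuous.intervalIntegrable (by
      have : Continuous fun v => (Γ * mE Γ v) i j := by
        have : Continuous fun v => Γ * mE Γ v := continuous_const.mul (mE_cont Γ)
        exact ((continuous_apply j).comp (continuous_apply i)).comp this
      exact this.neg) 0 s)
  have : (∫ v in (0:ℝ)..s, (-(Γ * mE Γ v)) i j) = - ∫ v in (0:ℝ)..s, (Γ * mE Γ v) i j := by
    rw [← intervalIntegral.integral_neg]; rfl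
  rw [this] at h
  simp only [mE_zero] at h
  linarith [h]

lemma mE_entry_bound (hd : 1 ≤ d) (hΓp : Γ.PosDef) :
    ∃ C : ℝ, ∃ l : ℝ, 0 < l ∧ ∀ s : ℝ, 0 ≤ s → ∀ i j : Fin d,
      |mE Γ s i j| ≤ C * Real.exp (-l * s) := by
  have hA : Γ.IsHermitian := hΓp.1
  set U : Matrix (Fin d) (Fin d) ℝ := (hA.eigenvectorUnitary : Matrix (Fin d) (Fin d) ℝ) with hU
  have hUmem : U ∈ Matrix.unitaryGroup (Fin d) ℝ := (hA.eigenvectorUnitary).2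
  have hUunit : IsUnit U := ⟨Unitary.toUnits ⟨U, hUmem⟩, rfl⟩
  have hUinv : U⁻¹ = star U :=
    Matrix.inv_eq_right_inv ((Matrix.mem_unitaryGroup_iff).mp hUmem)
  have hne : Nonempty (Fin d) := ⟨⟨0, hd⟩⟩
  set l : ℝ := Finset.univ.inf' (Finset.univ_nonempty) hA.eigenvalues with hl
  have hlpos : 0 < l := by
    obtain ⟨k, -, hk⟩ := Finset.exists_mem_eq_inf' (Finset.univ_nonempty) hA.eigenvalues
    rw [hl, hk]; exact hΓp.eigenvalues_pos k
  have hspec : ∀ s : ℝ, mE Γ s =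
      U * Matrix.diagonal (fun k => Real.exp (-s * hA.eigenvalues k)) * star U := by
    intro s
    have h1 : (-s) • Γ = U * ((-s) • Matrix.diagonal hA.eigenvalues) * U⁻¹ := by
      rw [hUinv]
      conv_lhs => rw [hA.spectral_theorem]
      rw [RCLike.ofReal_real_eq_id]
      simp only [Function.comp_def, id]
      rw [Matrix.mul_smul, Matrix.smul_mul]
      simp only [Unitary.conjStarAlgAut_apply, hU]
    rw [mE, h1, Matrix.exp_conj U _ hUunit, hUinv]
    congr 2
    have hfun : NormedSpace.exp ((-s) • hA.eigenvalues) =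
        fun k => Real.exp (-s * hA.eigenvalues k) := by
      funext k
      rw [Pi.coe_exp, Pi.smul_apply, smul_eq_mul, ← Real.exp_eq_exp_ℝ]
    rw [← Matrix.diagonal_smul, Matrix.exp_diagonal, hfun]
  refine ⟨∑ i : Fin d, ∑ j : Fin d, ∑ k : Fin d, |U i k| * |star U k j|, l, hlpos, ?_⟩
  intro s hs i j
  rw [hspec s]
  rw [Matrix.mul_apply]
  refine le_trans (Finset.abs_sum_le_sum_abs _ _) ?_
  have key : ∀ k, |(U * Matrix.diagonal fun k => Real.exp (-s * hA.eigenvalues k)) i k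
      * star U k j| ≤ |U i k| * |star U k j| * Real.exp (-l * s) := by
    intro k
    rw [Matrix.mul_diagonal, abs_mul, abs_mul]
    have h1 : |Real.exp (-s * hA.eigenvalues k)| ≤ Real.exp (-l * s) := by
      rw [abs_of_pos (Real.exp_pos _)]
      apply Real.exp_le_exp.2
      have : l ≤ hA.eigenvalues k := Finset.inf'_le _ (Finset.mem_univ k)
      nlinarith
    calc |U i k| * |Real.exp (-s * hA.eigenvalues k)| * |star U k j|
        ≤ |U i k| * Real.exp (-l * s) * |star U k j| := by
          gcongr
      _ = |U i k| * |star U k j| * Real.exp (-l * s) := by ring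
  refine le_trans (Finset.sum_le_sum fun k _ => key k) ?_
  rw [← Finset.sum_mul]
  refine mul_le_mul_of_nonneg_right ?_ (Real.exp_pos _).le
  calc ∑ k : Fin d, |U i k| * |star U k j|
      ≤ ∑ j' : Fin d, ∑ k : Fin d, |U i k| * |star U k j'| := by
        refine Finset.single_le_sum (f := fun j' => ∑ k : Fin d, |U i k| * |star U k j'|) (fun j' _ => ?_) (Finset.mem_univ j)
        positivity
    _ ≤ ∑ i' : Fin d, ∑ j' : Fin d, ∑ k : Fin d, |U i' k| * |star U k j'| := by
        refine Finset.single_le_sum (f := fun i' => ∑ j' : Fin d, ∑ k : Fin d, |U i' k| * |star U k j'|) (fun i' _ => ?_) (Finset.mem_univ i)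
        positivity

lemma exp_rpow_integrableOn {b q : ℝ} (hb : 0 < b) (hq : -1 < q) :
    IntegrableOn (fun s => Real.exp (-(b * s)) * s ^ q) (Ioi (0:ℝ)) := by
  have h0 := Real.GammaIntegral_convergent (by linarith : (0:ℝ) < q + 1)
  simp only [add_sub_cancel_right] at h0
  have h1 : IntegrableOn (fun x => Real.exp (-(b * x)) * (b * x) ^ q) (Ioi (0:ℝ)) := by
    have := (MeasureTheory.integrableOn_Ioi_comp_mul_left_iff
      (fun x => Real.exp (-x) * x ^ q) 0 hb).mpr (by simpa using h0)
    simpa using this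
  have h2 : IntegrableOn (fun x => b ^ q * (Real.exp (-(b * x)) * x ^ q)) (Ioi (0:ℝ)) := by
    apply h1.congr_fun _ measurableSet_Ioi
    intro x hx
    dsimp only
    rw [Real.mul_rpow hb.le (le_of_lt hx)]
    ring
  have h3 : IntegrableOn (fun x => (b ^ q)⁻¹ * (b ^ q * (Real.exp (-(b * x)) * x ^ q)))
      (Ioi (0:ℝ)) := h2.const_mul _
  apply h3.congr_fun _ measurableSet_Ioi
  intro x hx
  dsimp only
  rw [← mul_assoc, inv_mul_cancel₀ (ne_of_gt (Real.rpow_pos_of_pos hb q)), one_mul]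

lemma rpow_continuousOn {q : ℝ} : ContinuousOn (fun s : ℝ => s ^ q) (Ioi (0:ℝ)) :=
  fun s hs => (Real.continuousAt_rpow_const s q (Or.inl (ne_of_gt hs))).continuousWithinAt

lemma entry_mul_rpow_integrableOn {C l : ℝ} (hl : 0 < l)
    (hCl : ∀ s : ℝ, 0 ≤ s → ∀ i j : Fin d, |mE Γ s i j| ≤ C * Real.exp (-l * s))
    {q : ℝ} (hq : -1 < q) (i j : Fin d) :
    IntegrableOn (fun s => mE Γ s i j * s ^ q) (Ioi (0:ℝ)) := by
  have hmeas : AEStronglyMeasurable (fun s => mE Γ s i j * s ^ q)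
      (volume.restrict (Ioi (0:ℝ))) :=
    (((mE_entry_cont Γ i j).continuousOn).mul rpow_continuousOn).aestronglyMeasurable
      measurableSet_Ioi
  refine Integrable.mono' ((exp_rpow_integrableOn hl hq).const_mul C) hmeas ?_
  rw [ae_restrict_iff' measurableSet_Ioi]
  filter_upwards with s
  intro hs
  rw [Real.norm_eq_abs, abs_mul, ← mul_assoc]
  have h1 : |mE Γ s i j| ≤ C * Real.exp (-(l * s)) := by
    have := hCl s (le_of_lt hs) i j
    rwa [neg_mul] at this
  have h2 : |s ^ q| = s ^ q := abs_of_nonneg (Real.rpow_nonneg (le_of_lt hs) q)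
  rw [h2]
  exact mul_le_mul_of_nonneg_right h1 (Real.rpow_nonneg (le_of_lt hs) q)

end

set_option maxHeartbeats 1000000 in
/-- As `t → ∞`, `(1/t) φ(t) → H Γ ∫₀^∞ e^{−Γs} s^{2H−1} ds`, the limit being a convergent
Bochner integral. -/
theorem stmt13 (d : ℕ) (hd : 1 ≤ d) (Γ : Matrix (Fin d) (Fin d) ℝ)
    (hΓs : Γ.IsSymm) (hΓp : Γ.PosDef) (H : ℝ) (hH : H ∈ Set.Ioc (0 : ℝ) (1 / 2)) :
    (∀ i j : Fin d, IntegrableOn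
      (fun s : ℝ => NormedSpace.exp ((-s) • Γ) i j * s ^ (2 * H - 1))
      (Set.Ioi (0 : ℝ))) ∧
    Tendsto (fun t : ℝ => (1 / t) • fouPhi Γ H t) atTop
      (nhds (H • (Γ * Matrix.of fun i j =>
        ∫ s in Set.Ioi (0 : ℝ),
          NormedSpace.exp ((-s) • Γ) i j * s ^ (2 * H - 1)))) := by
  obtain ⟨hH0, hH2⟩ := hH
  set p : ℝ := 2 * H - 1 with hpdef
  have hp : (-1 : ℝ) < p := by simp only [hpdef]; linarith
  have hp1 : p + 1 = 2 * H := by simp only [hpdef]; ring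
  obtain ⟨C, l, hl, hCl⟩ := mE_entry_bound Γ hd hΓp
  have hC : 0 ≤ C := by
    have h := hCl 0 le_rfl ⟨0, hd⟩ ⟨0, hd⟩
    have h2 := le_trans (abs_nonneg _) h
    simpa using h2
  -- the integrand entries
  set g : Fin d → Fin d → ℝ → ℝ := fun i j s => mE Γ s i j * s ^ p with hgdef
  have gint : ∀ i j, IntegrableOn (g i j) (Ioi (0:ℝ)) :=
    fun i j => entry_mul_rpow_integrableOn Γ hl hCl hp i j
  refine ⟨fun i j => gint i j, ?_⟩
  -- primitives
  set Gi : Fin d → Fin d → ℝ → ℝ := fun i j t => ∫ v in (0:ℝ)..t, g i j v with hGidef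
  set Ginf : Fin d → Fin d → ℝ := fun i j => ∫ v in Ioi (0:ℝ), g i j v with hGinfdef
  have hgI : ∀ i j, ∀ {s : ℝ}, 0 ≤ s → IntervalIntegrable (g i j) volume 0 s := by
    intro i j s hs
    rw [intervalIntegrable_iff_integrableOn_Ioc_of_le hs]
    exact (gint i j).mono_set (fun x hx => hx.1)
  have hl2 : 0 < l / 2 := by linarith
  -- dominating kernel and its integral
  set Kf : ℝ → ℝ := fun v => C * (Real.exp (-(l/2) * v) * v ^ p) with hKfdef
  have hKfint : IntegrableOn Kf (Ioi (0:ℝ)) := by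
    have h0 : IntegrableOn (fun x => C * (Real.exp (-(l/2 * x)) * x ^ p)) (Ioi (0:ℝ)) :=
      (exp_rpow_integrableOn hl2 hp).const_mul C
    apply h0.congr_fun _ measurableSet_Ioi
    intro x hx
    simp only [hKfdef, neg_mul]
  set K : ℝ := ∫ v in Ioi (0:ℝ), Kf v with hKdef
  have hKfnonneg : ∀ v : ℝ, 0 < v → 0 ≤ Kf v := by
    intro v hv
    simp only [hKfdef]
    have := Real.exp_pos (-(l/2) * v)
    have := Real.rpow_nonneg hv.le p
    positivity
  have hK : 0 ≤ K := setIntegral_nonneg measurableSet_Ioi (fun v hv => hKfnonneg v hv)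
  -- continuity of primitives
  have hGi_cont : ∀ i j (t : ℝ), 0 ≤ t → ContinuousOn (Gi i j) (Set.uIcc 0 t) := by
    intro i j t ht
    apply intervalIntegral.continuousOn_primitive_interval
    rw [uIcc_of_le ht, integrableOn_Icc_iff_integrableOn_Ioc]
    exact (gint i j).mono_set (fun x hx => hx.1)
  have hI_cont : ∀ i j, Continuous (fun s : ℝ => ∫ v in (0:ℝ)..s, mE Γ v i j) :=
    fun i j => intervalIntegral.continuous_primitive
      (fun a b => ((mE_entry_cont Γ i j)).intervalIntegrable a b) 0
  -- tail bound
  have h_tail : ∀ i j (s : ℝ), 0 ≤ s → |Gi i j s - Ginf i j| ≤ K * Real.exp (-(l/2) * s) := by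
    intro i j s hs
    have hIoisub : Ioi s ⊆ Ioi (0:ℝ) := Ioi_subset_Ioi hs
    have hInt1 : IntegrableOn (g i j) (Ioc (0:ℝ) s) := (gint i j).mono_set (fun x hx => hx.1)
    have hInt2 : IntegrableOn (g i j) (Ioi s) := (gint i j).mono_set hIoisub
    have h1 : Ginf i j = Gi i j s + ∫ v in Ioi s, g i j v := by
      simp only [hGidef, hGinfdef]
      rw [intervalIntegral.integral_of_le hs,
        ← setIntegral_union (Ioc_disjoint_Ioi le_rfl) measurableSet_Ioi hInt1 hInt2,
        Ioc_union_Ioi_eq_Ioi hs]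
    rw [h1]
    have h2 : Gi i j s - (Gi i j s + ∫ v in Ioi s, g i j v) = -(∫ v in Ioi s, g i j v) := by ring
    rw [h2, abs_neg]
    have h3 : |∫ v in Ioi s, g i j v| ≤ ∫ v in Ioi s, |g i j v| := by
      simpa [Real.norm_eq_abs] using
        norm_integral_le_integral_norm (μ := volume.restrict (Ioi s)) (g i j)
    refine h3.trans ?_
    have h4 : ∫ v in Ioi s, |g i j v| ≤ ∫ v in Ioi s, Kf v * Real.exp (-(l/2) * s) := by
      refine setIntegral_mono_on hInt2.abs ((hKfint.mono_set hIoisub).mul_const _)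
        measurableSet_Ioi ?_
      intro v hv
      have hv0 : (0:ℝ) < v := lt_of_le_of_lt hs hv
      have hb := hCl v hv0.le i j
      simp only [hgdef, hKfdef]
      rw [abs_mul, abs_of_nonneg (Real.rpow_nonneg hv0.le p)]
      have hexp : Real.exp (-l * v) = Real.exp (-(l/2) * v) * Real.exp (-(l/2) * v) := by
        rw [← Real.exp_add]
        congr 1
        ring
      have hexp2 : Real.exp (-(l/2) * v) ≤ Real.exp (-(l/2) * s) := by
        apply Real.exp_le_exp.2
        have := le_of_lt (mem_Ioi.mp hv)
        nlinarith
      have hEv : |mE Γ v i j| ≤ C * (Real.exp (-(l/2) * v) * Real.exp (-(l/2) * s)) := by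
        refine hb.trans ?_
        rw [hexp]
        have hpos := (Real.exp_pos (-(l/2) * v)).le
        exact mul_le_mul_of_nonneg_left (mul_le_mul_of_nonneg_left hexp2 hpos) hC
      calc |mE Γ v i j| * v ^ p
          ≤ C * (Real.exp (-(l/2) * v) * Real.exp (-(l/2) * s)) * v ^ p :=
            mul_le_mul_of_nonneg_right hEv (Real.rpow_nonneg hv0.le p)
        _ = C * (Real.exp (-(l/2) * v) * v ^ p) * Real.exp (-(l/2) * s) := by ring
    refine h4.trans ?_
    rw [integral_mul_const]
    refine mul_le_mul_of_nonneg_right ?_ (Real.exp_pos _).le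
    exact setIntegral_mono_set hKfint
      ((ae_restrict_iff' measurableSet_Ioi).mpr (ae_of_all _ fun v hv => hKfnonneg v hv))
      (HasSubset.Subset.eventuallyLE hIoisub)
  -- first term tends to 0
  have hfirst : ∀ i j, Tendsto (fun t : ℝ => (1/t) * Gi i j t) atTop (nhds 0) := by
    intro i j
    have h1 : Tendsto (fun t : ℝ => Gi i j t) atTop (nhds (Ginf i j)) :=
      MeasureTheory.intervalIntegral_tendsto_integral_Ioi 0 (gint i j) tendsto_id
    have h2 : Tendsto (fun t : ℝ => 1/t) atTop (nhds 0) := by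
      simpa [one_div] using tendsto_inv_atTop_zero
    simpa using h2.mul h1
  -- Cesàro term
  have havg : ∀ i j, Tendsto (fun t : ℝ => (1/t) * ∫ s in (0:ℝ)..t, Gi i j s) atTop
      (nhds (Ginf i j)) := by
    intro i j
    have hKe_int : IntegrableOn (fun s : ℝ => K * Real.exp (-(l/2) * s)) (Ioi (0:ℝ)) :=
      (exp_neg_integrableOn_Ioi 0 hl2).const_mul K
    set K2 : ℝ := ∫ s in Ioi (0:ℝ), K * Real.exp (-(l/2) * s) with hK2def
    have hbound : ∀ᶠ t in (atTop : Filter ℝ),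
        |(1/t) * (∫ s in (0:ℝ)..t, Gi i j s) - Ginf i j| ≤ K2 * (1/t) := by
      filter_upwards [eventually_gt_atTop (0:ℝ)] with t ht
      have hGiInt : IntervalIntegrable (Gi i j) volume 0 t :=
        (hGi_cont i j t ht.le).intervalIntegrable
      have e1 : (1/t) * (∫ s in (0:ℝ)..t, Gi i j s) - Ginf i j
          = (1/t) * ∫ s in (0:ℝ)..t, (Gi i j s - Ginf i j) := by
        rw [intervalIntegral.integral_sub hGiInt intervalIntegrable_const,
          intervalIntegral.integral_const, sub_zero, smul_eq_mul]
        field_simp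
      rw [e1, abs_mul, abs_of_pos (by positivity : (0:ℝ) < 1/t), mul_comm]
      refine mul_le_mul_of_nonneg_right ?_ (by positivity)
      have e2 : |∫ s in (0:ℝ)..t, (Gi i j s - Ginf i j)|
          ≤ ∫ s in (0:ℝ)..t, |Gi i j s - Ginf i j| :=
        intervalIntegral.abs_integral_le_integral_abs ht.le
      refine e2.trans ?_
      have e3 : (∫ s in (0:ℝ)..t, |Gi i j s - Ginf i j|)
          ≤ ∫ s in (0:ℝ)..t, K * Real.exp (-(l/2) * s) := by
        refine intervalIntegral.integral_mono_on ht.le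
          ((hGiInt.sub intervalIntegrable_const).abs) ?_ ?_
        · exact (Continuous.intervalIntegrable (by continuity) 0 t)
        · intro s hs
          exact h_tail i j s hs.1
      refine e3.trans ?_
      rw [intervalIntegral.integral_of_le ht.le]
      refine setIntegral_mono_set hKe_int
        ((ae_restrict_iff' measurableSet_Ioi).mpr (ae_of_all _ fun v _ => by positivity))
        (HasSubset.Subset.eventuallyLE (fun x hx => hx.1))
    have hz : Tendsto (fun t : ℝ => K2 * (1/t)) atTop (nhds 0) := by
      have h2 : Tendsto (fun t : ℝ => 1/t) atTop (nhds 0) := by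
        simpa [one_div] using tendsto_inv_atTop_zero
      simpa using h2.const_mul K2
    have hsq : Tendsto (fun t : ℝ => (1/t) * (∫ s in (0:ℝ)..t, Gi i j s) - Ginf i j)
        atTop (nhds 0) := by
      refine squeeze_zero_norm' ?_ hz
      filter_upwards [hbound] with t ht
      simpa [Real.norm_eq_abs] using ht
    have := hsq.add_const (Ginf i j)
    simpa using this
  -- FTC identity summed against Γ
  have h_Itot : ∀ i j (s : ℝ), ∑ k, Γ i k * ∫ v in (0:ℝ)..s, mE Γ v k j
      = (1 : Matrix (Fin d) (Fin d) ℝ) i j - mE Γ s i j := by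
    intro i j s
    calc ∑ k, Γ i k * ∫ v in (0:ℝ)..s, mE Γ v k j
        = ∑ k, ∫ v in (0:ℝ)..s, Γ i k * mE Γ v k j :=
          Finset.sum_congr rfl fun k _ => (intervalIntegral.integral_const_mul _ _).symm
      _ = ∫ v in (0:ℝ)..s, ∑ k, Γ i k * mE Γ v k j :=
          (intervalIntegral.integral_finset_sum fun k _ =>
            (continuous_const.mul (mE_entry_cont Γ k j)).intervalIntegrable 0 s).symm
      _ = ∫ v in (0:ℝ)..s, (Γ * mE Γ v) i j :=
          intervalIntegral.integral_congr (fun v _ => (Matrix.mul_apply).symm)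
      _ = (1 : Matrix (Fin d) (Fin d) ℝ) i j - mE Γ s i j := mE_ftc Γ i j s
  -- the main pointwise identity
  have hPhi : ∀ t : ℝ, 0 ≤ t → ∀ i j, fouPhi Γ H t i j
      = H * (Gi i j t + ∑ k, Γ i k * ∫ s in (0:ℝ)..t, Gi k j s) := by
    intro t ht i j
    have hW : ∀ k, ∀ s ∈ Set.uIcc (0:ℝ) t,
        (∫ u in (0:ℝ)..s, mE Γ (s-u) k j * (s ^ p - (s-u) ^ p))
          = s ^ p * (∫ v in (0:ℝ)..s, mE Γ v k j) - Gi k j s := by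
      intro k s hs
      have hs0 : 0 ≤ s := by
        rw [uIcc_of_le ht] at hs
        exact hs.1
      have hcomp := intervalIntegral.integral_comp_sub_left
          (a := (0:ℝ)) (b := s) (fun v => mE Γ v k j * (s ^ p - v ^ p)) s
      simp only [sub_zero, sub_self] at hcomp
      rw [hcomp]
      have hsplit : ∀ v : ℝ, mE Γ v k j * (s ^ p - v ^ p)
          = s ^ p * mE Γ v k j - g k j v := by
        intro v
        simp only [hgdef]
        ring
      rw [intervalIntegral.integral_congr (fun v _ => hsplit v),
        intervalIntegral.integral_sub
          (((mE_entry_cont Γ k j).intervalIntegrable 0 s).const_mul _) (hgI k j hs0),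
        intervalIntegral.integral_const_mul]
    have hJ : ∀ k, (∫ s in (0:ℝ)..t, ∫ u in (0:ℝ)..s, mE Γ (s-u) k j * (s ^ p - (s-u) ^ p))
        = (∫ s in (0:ℝ)..t, s ^ p * ∫ v in (0:ℝ)..s, mE Γ v k j)
          - ∫ s in (0:ℝ)..t, Gi k j s := by
      intro k
      rw [intervalIntegral.integral_congr
        (g := fun s => s ^ p * (∫ v in (0:ℝ)..s, mE Γ v k j) - Gi k j s) (hW k)]
      exact intervalIntegral.integral_sub
        ((intervalIntegral.intervalIntegrable_rpow' hp).mul_continuousOn (hI_cont k j).continuousOn)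
        (hGi_cont k j t ht).intervalIntegrable
    have hU : fouU Γ H t i j = H * ∑ k, Γ i k *
        ((∫ s in (0:ℝ)..t, s ^ p * ∫ v in (0:ℝ)..s, mE Γ v k j)
          - ∫ s in (0:ℝ)..t, Gi k j s) := by
      simp only [fouU, Matrix.smul_apply, Matrix.mul_apply, Matrix.of_apply, smul_eq_mul]
      congr 1
      refine Finset.sum_congr rfl fun k _ => ?_
      congr 1
      exact hJ k
    have hsum1 : ∑ k, Γ i k *
        ((∫ s in (0:ℝ)..t, s ^ p * ∫ v in (0:ℝ)..s, mE Γ v k j)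
          - ∫ s in (0:ℝ)..t, Gi k j s)
        = (∫ s in (0:ℝ)..t, s ^ p * ((1 : Matrix (Fin d) (Fin d) ℝ) i j - mE Γ s i j))
          - ∑ k, Γ i k * ∫ s in (0:ℝ)..t, Gi k j s := by
      have hms : ∀ k : Fin d, Γ i k *
          ((∫ s in (0:ℝ)..t, s ^ p * ∫ v in (0:ℝ)..s, mE Γ v k j)
            - ∫ s in (0:ℝ)..t, Gi k j s)
          = Γ i k * (∫ s in (0:ℝ)..t, s ^ p * ∫ v in (0:ℝ)..s, mE Γ v k j)
            - Γ i k * ∫ s in (0:ℝ)..t, Gi k j s := fun k => mul_sub _ _ _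
      simp only [hms]
      rw [Finset.sum_sub_distrib]
      congr 1
      calc ∑ k, Γ i k * ∫ s in (0:ℝ)..t, s ^ p * ∫ v in (0:ℝ)..s, mE Γ v k j
          = ∑ k, ∫ s in (0:ℝ)..t, Γ i k * (s ^ p * ∫ v in (0:ℝ)..s, mE Γ v k j) :=
            Finset.sum_congr rfl fun k _ => (intervalIntegral.integral_const_mul _ _).symm
        _ = ∫ s in (0:ℝ)..t, ∑ k, Γ i k * (s ^ p * ∫ v in (0:ℝ)..s, mE Γ v k j) :=
            (intervalIntegral.integral_finset_sum fun k _ =>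
              (((intervalIntegral.intervalIntegrable_rpow' hp).mul_continuousOn
                (hI_cont k j).continuousOn).const_mul _)).symm
        _ = ∫ s in (0:ℝ)..t, s ^ p * ((1 : Matrix (Fin d) (Fin d) ℝ) i j - mE Γ s i j) := by
            refine intervalIntegral.integral_congr (fun s _ => ?_)
            rw [show ∑ k, Γ i k * (s ^ p * ∫ v in (0:ℝ)..s, mE Γ v k j)
              = s ^ p * ∑ k, Γ i k * ∫ v in (0:ℝ)..s, mE Γ v k j by
                rw [Finset.mul_sum]
                exact Finset.sum_congr rfl fun k _ => by ring]
            rw [h_Itot i j s]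
    have hx1 : (∫ s in (0:ℝ)..t, s ^ p * ((1 : Matrix (Fin d) (Fin d) ℝ) i j - mE Γ s i j))
        = (∫ s in (0:ℝ)..t, s ^ p) * (1 : Matrix (Fin d) (Fin d) ℝ) i j - Gi i j t := by
      have hsplit : ∀ s : ℝ, s ^ p * ((1 : Matrix (Fin d) (Fin d) ℝ) i j - mE Γ s i j)
          = s ^ p * (1 : Matrix (Fin d) (Fin d) ℝ) i j - g i j s := by
        intro s
        simp only [hgdef]
        ring
      rw [intervalIntegral.integral_congr (fun s _ => hsplit s),
        intervalIntegral.integral_sub ((intervalIntegral.intervalIntegrable_rpow' hp).mul_const _) (hgI i j ht),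
        intervalIntegral.integral_mul_const]
    have hrpow : (∫ s in (0:ℝ)..t, s ^ p) = t ^ (2*H) / (2*H) := by
      rw [integral_rpow (Or.inl hp), Real.zero_rpow (by linarith : p + 1 ≠ 0), hp1]
      ring
    have hfp : fouPhi Γ H t i j
        = (1/2 * t ^ (2*H)) * (1 : Matrix (Fin d) (Fin d) ℝ) i j - fouU Γ H t i j := by
      simp [fouPhi, Matrix.sub_apply, Matrix.smul_apply, smul_eq_mul]
    rw [hfp, hU, hsum1, hx1, hrpow]
    field_simp
    ring
  -- assemble
  refine tendsto_pi_nhds.mpr fun i => tendsto_pi_nhds.mpr fun j => ?_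
  have hlim : Tendsto (fun t : ℝ => H * ((1/t) * Gi i j t
      + ∑ k, Γ i k * ((1/t) * ∫ s in (0:ℝ)..t, Gi k j s))) atTop
      (nhds (H * (0 + ∑ k, Γ i k * Ginf k j))) :=
    Tendsto.const_mul H ((hfirst i j).add
      (tendsto_finset_sum _ fun k _ => ((havg k j).const_mul (Γ i k))))
  have hgoal_eq : (H • (Γ * Matrix.of fun i j =>
      ∫ s in Set.Ioi (0:ℝ), NormedSpace.exp ((-s) • Γ) i j * s ^ p)) i j
      = H * (0 + ∑ k, Γ i k * Ginf k j) := by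
    rw [zero_add, Matrix.smul_apply, smul_eq_mul, Matrix.mul_apply]
    rfl
  rw [hgoal_eq]
  refine Tendsto.congr' ?_ hlim
  filter_upwards [eventually_gt_atTop (0:ℝ)] with t ht
  have hsmul : ((1/t) • fouPhi Γ H t) i j = (1/t) * fouPhi Γ H t i j := rfl
  rw [hsmul, hPhi t ht.le i j]
  have hsum : (1/t) * ∑ k, Γ i k * ∫ s in (0:ℝ)..t, Gi k j s
      = ∑ k, Γ i k * ((1/t) * ∫ s in (0:ℝ)..t, Gi k j s) := by
    rw [Finset.mul_sum]
    exact Finset.sum_congr rfl fun k _ => by ring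
  rw [show (1/t) * (H * (Gi i j t + ∑ k, Γ i k * ∫ s in (0:ℝ)..t, Gi k j s))
      = H * ((1/t) * Gi i j t
        + (1/t) * ∑ k, Γ i k * ∫ s in (0:ℝ)..t, Gi k j s) from by ring, hsum]
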